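/- arXiv:1704.07180 — 3 statements merged into one kernel-verified Lean document; each statement's English description precedes it below -/
import Mathlib

section
/- Let γ > 2 and η(s) = s² h(s^{1/γ})² with h smooth near 0 and h(0) = 0, h'(0) ≠ 0. Then the even extension s ↦ η(|s|) belongs to C^{2, 2/γ} near 0: η'' is Hölder continuous of exponent 2/γ, and |η'''(s)| ≤ C s^{2/γ - 1} for small s > 0. -/
open Real Set

set_option maxHeartbeats 1000000


noncomputable def S8F1 (h h1 : ℝ → ℝ) (p : ℝ) : ℝ → ℝ := fun x =>
  2*x*(h (x^p))^2 + 2*p*x*(x^p)*(h (x^p))*(h1 (x^p))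

noncomputable def S8F2 (h h1 h2 : ℝ → ℝ) (p : ℝ) : ℝ → ℝ := fun x =>
  2*(h (x^p))^2 + 2*p*(p+3)*(x^p)*(h (x^p))*(h1 (x^p))
    + 2*p^2*(x^p)^2*((h1 (x^p))^2 + h (x^p) * h2 (x^p))

noncomputable def S8F3 (h h1 h2 h3 : ℝ → ℝ) (p : ℝ) : ℝ → ℝ := fun x =>
  (4*p + 2*p^2*(p+3))*((x^p)/x)*(h (x^p))*(h1 (x^p))
  + (2*p^2*(p+3) + 4*p^3)*((x^p)^2/x)*((h1 (x^p))^2 + h (x^p) * h2 (x^p))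
  + 2*p^3*((x^p)^3/x)*(3*(h1 (x^p))*(h2 (x^p)) + h (x^p) * h3 (x^p))

lemma S8comp {f : ℝ → ℝ} {f' p x : ℝ} (hx : 0 < x) (hf : HasDerivAt f f' (x^p)) :
    HasDerivAt (fun y : ℝ => f (y^p)) (f' * (p * (x^p) / x)) x := by
  have h1 := hf.comp x (Real.hasDerivAt_rpow_const (p := p) (Or.inl hx.ne'))
  have h2 : x ^ (p-1) = x^p / x := by
    rw [Real.rpow_sub hx, Real.rpow_one]
  simpa [Function.comp_def, h2, mul_div_assoc] using h1

lemma S8HD1 {h h1 : ℝ → ℝ} {p x : ℝ} (hx : 0 < x) (hh : HasDerivAt h (h1 (x^p)) (x^p)) :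
    HasDerivAt (fun y : ℝ => y^2 * (h (y^p))^2) (S8F1 h h1 p x) x := by
  have hx' : x ≠ 0 := hx.ne'
  have hw := S8comp hx hh
  have H : HasDerivAt (fun y : ℝ => y^2 * (h (y^p))^2) _ x := (hasDerivAt_pow 2 x).mul (hw.pow 2)
  convert H using 1
  simp only [S8F1]
  push_cast
  field_simp

lemma S8HD2 {h h1 h2 : ℝ → ℝ} {p x : ℝ} (hx : 0 < x)
    (hh : HasDerivAt h (h1 (x^p)) (x^p)) (hh1 : HasDerivAt h1 (h2 (x^p)) (x^p)) :
    HasDerivAt (S8F1 h h1 p) (S8F2 h h1 h2 p x) x := by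
  have hx' : x ≠ 0 := hx.ne'
  have hv : HasDerivAt (fun y : ℝ => y^p) (p * (x^p)/x) x := by
    have := Real.hasDerivAt_rpow_const (p := p) (Or.inl hx.ne')
    simpa [Real.rpow_sub hx, Real.rpow_one, mul_div_assoc] using this
  have hw := S8comp hx hh
  have ha := S8comp hx hh1
  have A1 := HasDerivAt.const_mul (2:ℝ) ((hasDerivAt_id x).mul (hw.pow 2))
  have A2 := HasDerivAt.const_mul (2*p) ((hasDerivAt_id x).mul (hv.mul (hw.mul ha)))
  have S := A1.add A2
  have S' : HasDerivAt (S8F1 h h1 p) _ x :=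
    S.congr_of_eventuallyEq (Filter.Eventually.of_forall fun y => by simp only [S8F1, id_eq, Pi.mul_apply, Pi.pow_apply, Pi.add_apply]; ring)
  convert S' using 1
  simp only [S8F2, id_eq, Pi.mul_apply, Pi.pow_apply, Pi.add_apply]
  push_cast
  field_simp
  ring

lemma S8HD3 {h h1 h2 h3 : ℝ → ℝ} {p x : ℝ} (hx : 0 < x)
    (hh : HasDerivAt h (h1 (x^p)) (x^p)) (hh1 : HasDerivAt h1 (h2 (x^p)) (x^p))
    (hh2 : HasDerivAt h2 (h3 (x^p)) (x^p)) :
    HasDerivAt (S8F2 h h1 h2 p) (S8F3 h h1 h2 h3 p x) x := by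
  have hx' : x ≠ 0 := hx.ne'
  have hv : HasDerivAt (fun y : ℝ => y^p) (p * (x^p)/x) x := by
    have := Real.hasDerivAt_rpow_const (p := p) (Or.inl hx.ne')
    simpa [Real.rpow_sub hx, Real.rpow_one, mul_div_assoc] using this
  have hw := S8comp hx hh
  have ha := S8comp hx hh1
  have hb := S8comp hx hh2
  have B1 := HasDerivAt.const_mul (2:ℝ) (hw.pow 2)
  have B2 := HasDerivAt.const_mul (2*p*(p+3)) (hv.mul (hw.mul ha))
  have B3 := HasDerivAt.const_mul (2*p^2) ((hv.pow 2).mul ((ha.pow 2).add (hw.mul hb)))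
  have S := (B1.add B2).add B3
  have S' : HasDerivAt (S8F2 h h1 h2 p) _ x :=
    S.congr_of_eventuallyEq (Filter.Eventually.of_forall fun y => by simp only [S8F2, id_eq, Pi.mul_apply, Pi.pow_apply, Pi.add_apply]; ring)
  convert S' using 1
  simp only [S8F3, id_eq, Pi.mul_apply, Pi.pow_apply, Pi.add_apply]
  push_cast
  field_simp
  ring



lemma S8mm {a b A B : ℝ} (ha : |a| ≤ A) (hb : |b| ≤ B) : |a*b| ≤ A*B := by
  rw [abs_mul]
  exact mul_le_mul ha hb (abs_nonneg b) (le_trans (abs_nonneg a) ha)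

lemma S8bound1 {p M x X H A : ℝ} (hp0 : 0 < p) (hp : p ≤ 1/2) (hM : 1 ≤ M)
    (hx0 : 0 ≤ x) (hX0 : 0 ≤ X) (hX1 : X ≤ 1) (hH : |H| ≤ M*X) (hA : |A| ≤ M) :
    |2*x*H^2 + 2*p*x*X*H*A| ≤ 100*M^2*(x*X^2) := by
  have hM0 : (0:ℝ) ≤ M := by linarith
  have hq1 : (0:ℝ) ≤ p := hp0.le
  have hq2 : (0:ℝ) ≤ p^2 := sq_nonneg p
  have hq3 : (0:ℝ) ≤ p^3 := pow_nonneg hp0.le 3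
  have hpc2 : p^2 ≤ 1/4 := by linarith [mul_le_mul hp hp hq1 (by norm_num : (0:ℝ) ≤ 1/2)]
  have hpc3 : p^3 ≤ 1/8 := by linarith [mul_le_mul hpc2 hp hq1 (by norm_num : (0:ℝ) ≤ 1/4)]
  have t1 : |2*x*H^2| ≤ 2*x*(M*X)*(M*X) := by
    rw [show (2*x*H^2 : ℝ) = 2*x*H*H by ring]
    exact S8mm (S8mm (le_of_eq (abs_of_nonneg (by linarith : (0:ℝ) ≤ 2*x))) hH) hH
  have t2 : |2*p*x*X*H*A| ≤ 2*p*x*X*(M*X)*M := by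
    exact S8mm (S8mm (le_of_eq (abs_of_nonneg (by linarith [mul_nonneg (mul_nonneg hq1 hx0) hX0] : (0:ℝ) ≤ 2*p*x*X))) hH) hA
  have q0 : (0:ℝ) ≤ M^2*(x*X^2) := mul_nonneg (sq_nonneg M) (mul_nonneg hx0 (sq_nonneg X))
  calc |2*x*H^2 + 2*p*x*X*H*A| ≤ |2*x*H^2| + |2*p*x*X*H*A| := abs_add_le _ _
    _ ≤ 2*x*(M*X)*(M*X) + 2*p*x*X*(M*X)*M := add_le_add t1 t2
    _ = (2+2*p)*(M^2*(x*X^2)) := by ring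
    _ ≤ 100*(M^2*(x*X^2)) := mul_le_mul_of_nonneg_right (by linarith) q0
    _ = 100*M^2*(x*X^2) := by ring

lemma S8bound2 {p M X H A B : ℝ} (hp0 : 0 < p) (hp : p ≤ 1/2) (hM : 1 ≤ M)
    (hX0 : 0 ≤ X) (hX1 : X ≤ 1) (hH : |H| ≤ M*X) (hA : |A| ≤ M) (hB : |B| ≤ M) :
    |2*H^2 + 2*p*(p+3)*X*H*A + 2*p^2*X^2*(A^2 + H*B)| ≤ 100*M^2*X^2 := by
  have hM0 : (0:ℝ) ≤ M := by linarith
  have hq1 : (0:ℝ) ≤ p := hp0.le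
  have hq2 : (0:ℝ) ≤ p^2 := sq_nonneg p
  have hq3 : (0:ℝ) ≤ p^3 := pow_nonneg hp0.le 3
  have hpc2 : p^2 ≤ 1/4 := by linarith [mul_le_mul hp hp hq1 (by norm_num : (0:ℝ) ≤ 1/2)]
  have hpc3 : p^3 ≤ 1/8 := by linarith [mul_le_mul hpc2 hp hq1 (by norm_num : (0:ℝ) ≤ 1/4)]
  have hMX0 : (0:ℝ) ≤ M*X := le_trans (abs_nonneg H) hH
  have t1 : |2*H^2| ≤ 2*(M*X)*(M*X) := by
    rw [show (2*H^2 : ℝ) = 2*H*H by ring]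
    exact S8mm (S8mm (le_of_eq (abs_of_nonneg (by norm_num : (0:ℝ) ≤ 2))) hH) hH
  have t2 : |2*p*(p+3)*X*H*A| ≤ 2*p*(p+3)*X*(M*X)*M :=
    S8mm (S8mm (le_of_eq (abs_of_nonneg (by linarith [mul_nonneg (mul_nonneg hq1 hq1) hX0, mul_nonneg hq1 hX0] : (0:ℝ) ≤ 2*p*(p+3)*X))) hH) hA
  have hin : |A^2 + H*B| ≤ M*M + (M*X)*M := by
    calc |A^2 + H*B| ≤ |A^2| + |H*B| := abs_add_le _ _
      _ = |A*A| + |H*B| := by rw [sq]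
      _ ≤ M*M + (M*X)*M := add_le_add (S8mm hA hA) (S8mm hH hB)
  have t3 : |2*p^2*X^2*(A^2 + H*B)| ≤ 2*p^2*X^2*(M*M + (M*X)*M) :=
    S8mm (le_of_eq (abs_of_nonneg (by positivity : (0:ℝ) ≤ 2*p^2*X^2))) hin
  have q0 : (0:ℝ) ≤ M^2*X^2 := by positivity
  have hX3 : M^2*X^3 ≤ M^2*X^2 :=
    mul_le_mul_of_nonneg_left (pow_le_pow_of_le_one hX0 hX1 (by norm_num)) (by positivity)
  have hA1 : (2+2*p*(p+3)+2*p^2)*(M^2*X^2) ≤ 50*(M^2*X^2) :=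
    mul_le_mul_of_nonneg_right (by linarith [hpc2, hq1, hq2]) q0
  have hA2 : 2*p^2*(M^2*X^3) ≤ 50*(M^2*X^2) := by
    calc 2*p^2*(M^2*X^3) ≤ 2*p^2*(M^2*X^2) := by
          exact mul_le_mul_of_nonneg_left hX3 (by positivity)
      _ ≤ 50*(M^2*X^2) := mul_le_mul_of_nonneg_right (by linarith [hpc2]) q0
  calc |2*H^2 + 2*p*(p+3)*X*H*A + 2*p^2*X^2*(A^2 + H*B)|
      ≤ |2*H^2| + |2*p*(p+3)*X*H*A| + |2*p^2*X^2*(A^2 + H*B)| := abs_add_three _ _ _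
    _ ≤ 2*(M*X)*(M*X) + 2*p*(p+3)*X*(M*X)*M + 2*p^2*X^2*(M*M + (M*X)*M) :=
        add_le_add (add_le_add t1 t2) t3
    _ = (2+2*p*(p+3)+2*p^2)*(M^2*X^2) + 2*p^2*(M^2*X^3) := by ring
    _ ≤ 50*(M^2*X^2) + 50*(M^2*X^2) := add_le_add hA1 hA2
    _ = 100*M^2*X^2 := by ring

lemma S8bound3 {p M X H A B D : ℝ} (hp0 : 0 < p) (hp : p ≤ 1/2) (hM : 1 ≤ M)
    (hX0 : 0 ≤ X) (hX1 : X ≤ 1) (hH : |H| ≤ M*X) (hA : |A| ≤ M) (hB : |B| ≤ M) (hD : |D| ≤ M) :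
    |(4*p + 2*p^2*(p+3))*X*H*A + (2*p^2*(p+3) + 4*p^3)*X^2*(A^2 + H*B)
      + 2*p^3*X^3*(3*A*B + H*D)| ≤ 100*M^2*X^2 := by
  have hM0 : (0:ℝ) ≤ M := by linarith
  have hq1 : (0:ℝ) ≤ p := hp0.le
  have hq2 : (0:ℝ) ≤ p^2 := sq_nonneg p
  have hq3 : (0:ℝ) ≤ p^3 := pow_nonneg hp0.le 3
  have hpc2 : p^2 ≤ 1/4 := by linarith [mul_le_mul hp hp hq1 (by norm_num : (0:ℝ) ≤ 1/2)]
  have hpc3 : p^3 ≤ 1/8 := by linarith [mul_le_mul hpc2 hp hq1 (by norm_num : (0:ℝ) ≤ 1/4)]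
  have hMX0 : (0:ℝ) ≤ M*X := le_trans (abs_nonneg H) hH
  have t1 : |(4*p + 2*p^2*(p+3))*X*H*A| ≤ (4*p + 2*p^2*(p+3))*X*(M*X)*M :=
    S8mm (S8mm (le_of_eq (abs_of_nonneg (by linarith [mul_nonneg hq2 hX0, mul_nonneg hq3 hX0, mul_nonneg hq1 hX0] : (0:ℝ) ≤ (4*p + 2*p^2*(p+3))*X))) hH) hA
  have hin1 : |A^2 + H*B| ≤ M*M + (M*X)*M := by
    calc |A^2 + H*B| ≤ |A^2| + |H*B| := abs_add_le _ _
      _ = |A*A| + |H*B| := by rw [sq]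
      _ ≤ M*M + (M*X)*M := add_le_add (S8mm hA hA) (S8mm hH hB)
  have t2 : |(2*p^2*(p+3) + 4*p^3)*X^2*(A^2 + H*B)|
      ≤ (2*p^2*(p+3) + 4*p^3)*X^2*(M*M + (M*X)*M) :=
    S8mm (le_of_eq (abs_of_nonneg (mul_nonneg (by linarith [hq2, hq3] : (0:ℝ) ≤ 2*p^2*(p+3) + 4*p^3) (sq_nonneg X)))) hin1
  have hin2 : |3*A*B + H*D| ≤ 3*M*M + (M*X)*M := by
    calc |3*A*B + H*D| ≤ |3*A*B| + |H*D| := abs_add_le _ _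
      _ ≤ 3*M*M + (M*X)*M := add_le_add
          (S8mm (S8mm (le_of_eq (abs_of_nonneg (by norm_num : (0:ℝ) ≤ 3))) hA) hB)
          (S8mm hH hD)
  have t3 : |2*p^3*X^3*(3*A*B + H*D)| ≤ 2*p^3*X^3*(3*M*M + (M*X)*M) :=
    S8mm (le_of_eq (abs_of_nonneg (mul_nonneg (by linarith [hq3] : (0:ℝ) ≤ 2*p^3) (pow_nonneg hX0 3)))) hin2
  have q0 : (0:ℝ) ≤ M^2*X^2 := by positivity
  have hX3 : M^2*X^3 ≤ M^2*X^2 :=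
    mul_le_mul_of_nonneg_left (pow_le_pow_of_le_one hX0 hX1 (by norm_num)) (by positivity)
  have hX4 : M^2*X^4 ≤ M^2*X^2 :=
    mul_le_mul_of_nonneg_left (pow_le_pow_of_le_one hX0 hX1 (by norm_num)) (by positivity)
  have hA1 : ((4*p + 2*p^2*(p+3)) + (2*p^2*(p+3) + 4*p^3))*(M^2*X^2) ≤ 40*(M^2*X^2) :=
    mul_le_mul_of_nonneg_right (by linarith [hpc2, hpc3, hq1, hq2, hq3]) q0
  have hA2 : ((2*p^2*(p+3) + 4*p^3) + 6*p^3)*(M^2*X^3) ≤ 40*(M^2*X^2) := by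
    calc ((2*p^2*(p+3) + 4*p^3) + 6*p^3)*(M^2*X^3)
        ≤ ((2*p^2*(p+3) + 4*p^3) + 6*p^3)*(M^2*X^2) :=
          mul_le_mul_of_nonneg_left hX3 (by linarith [hq2, hq3])
      _ ≤ 40*(M^2*X^2) := mul_le_mul_of_nonneg_right (by linarith [hpc2, hpc3, hq2, hq3]) q0
  have hA3 : 2*p^3*(M^2*X^4) ≤ 20*(M^2*X^2) := by
    calc 2*p^3*(M^2*X^4) ≤ 2*p^3*(M^2*X^2) := mul_le_mul_of_nonneg_left hX4 (by linarith [hq3])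
      _ ≤ 20*(M^2*X^2) := mul_le_mul_of_nonneg_right (by linarith [hpc3]) q0
  calc |(4*p + 2*p^2*(p+3))*X*H*A + (2*p^2*(p+3) + 4*p^3)*X^2*(A^2 + H*B)
      + 2*p^3*X^3*(3*A*B + H*D)|
      ≤ |(4*p + 2*p^2*(p+3))*X*H*A| + |(2*p^2*(p+3) + 4*p^3)*X^2*(A^2 + H*B)|
        + |2*p^3*X^3*(3*A*B + H*D)| := abs_add_three _ _ _
    _ ≤ (4*p + 2*p^2*(p+3))*X*(M*X)*M + (2*p^2*(p+3) + 4*p^3)*X^2*(M*M + (M*X)*M)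
        + 2*p^3*X^3*(3*M*M + (M*X)*M) := add_le_add (add_le_add t1 t2) t3
    _ = ((4*p + 2*p^2*(p+3)) + (2*p^2*(p+3) + 4*p^3))*(M^2*X^2)
        + ((2*p^2*(p+3) + 4*p^3) + 6*p^3)*(M^2*X^3) + 2*p^3*(M^2*X^4) := by ring
    _ ≤ 40*(M^2*X^2) + 40*(M^2*X^2) + 20*(M^2*X^2) := add_le_add (add_le_add hA1 hA2) hA3
    _ = 100*M^2*X^2 := by ring
theorem stmt_8 (γ : ℝ) (hγ : 2 < γ) (h : ℝ → ℝ) (U : Set ℝ) (hU : U ∈ nhds (0:ℝ))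
    (hh : ContDiffOn ℝ (⊤ : ℕ∞) h U) (h0 : h 0 = 0) (h0' : deriv h 0 ≠ 0)
    (η : ℝ → ℝ) (hη : ∀ x : ℝ, η x = x^2 * (h (|x| ^ (1/γ)))^2) :
    ∃ C > 0, ∃ δ > 0,
      (∀ x ∈ Ioo (-δ) δ, ∀ y ∈ Ioo (-δ) δ,
        |deriv (deriv η) x - deriv (deriv η) y| ≤ C * |x - y| ^ (2/γ)) ∧
      (∀ s ∈ Ioo (0:ℝ) δ, |deriv (deriv (deriv η)) s| ≤ C * s ^ (2/γ - 1)) := by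
  have hγ0 : (0:ℝ) < γ := by linarith
  set p := 1/γ with hp
  have hp0 : 0 < p := by rw [hp]; positivity
  have hp1 : 2*p ≤ 1 := by
    rw [hp, mul_one_div, div_le_one hγ0]; linarith
  have hphalf : p ≤ 1/2 := by linarith
  have h2γ : 2/γ = 2*p := by rw [hp]; ring
  have h2p0 : (0:ℝ) < 2*p := by linarith
  -- evenness of η and consequences
  have ηe : ∀ x, η (-x) = η x := by
    intro x
    rw [hη, hη, abs_neg]; ring
  have d1odd : ∀ x, deriv η x = -deriv η (-x) := by
    intro x
    conv_lhs => rw [show η = fun y => η (-y) from funext fun y => (ηe y).symm]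
    rw [deriv_comp_neg]
  have d1_0 : deriv η 0 = 0 := by
    have := d1odd 0
    simp only [neg_zero] at this
    linarith
  have η2even : ∀ x, deriv (deriv η) (-x) = deriv (deriv η) x := by
    intro x
    conv_rhs => rw [show deriv η = fun y => -(deriv η (-y)) from funext fun y => d1odd y]
    rw [deriv.fun_neg, deriv_comp_neg]
    ring
  -- neighborhood and smoothness data
  obtain ⟨ε, hε0, hεU⟩ : ∃ ε > 0, Ioo (-ε) ε ⊆ U := by
    obtain ⟨ε, hε0, hb⟩ := Metric.mem_nhds_iff.mp hU
    refine ⟨ε, hε0, fun t ht => hb ?_⟩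
    rw [Real.ball_eq_Ioo]
    simpa using ht
  have hO : IsOpen (Ioo (-ε) ε) := isOpen_Ioo
  have hhO : ContDiffOn ℝ (⊤ : ℕ∞) h (Ioo (-ε) ε) := hh.mono hεU
  have hc1 : ContDiffOn ℝ (⊤ : ℕ∞) (deriv h) (Ioo (-ε) ε) := hhO.deriv_of_isOpen hO (by simp)
  have hc2 : ContDiffOn ℝ (⊤ : ℕ∞) (deriv (deriv h)) (Ioo (-ε) ε) := hc1.deriv_of_isOpen hO (by simp)
  have hc3 : ContDiffOn ℝ (⊤ : ℕ∞) (deriv (deriv (deriv h))) (Ioo (-ε) ε) :=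
    hc2.deriv_of_isOpen hO (by simp)
  have hd_h : ∀ u ∈ Ioo (-ε) ε, HasDerivAt h (deriv h u) u := fun u hu =>
    ((hhO.differentiableOn (by simp) u hu).differentiableAt (hO.mem_nhds hu)).hasDerivAt
  have hd_h1 : ∀ u ∈ Ioo (-ε) ε, HasDerivAt (deriv h) (deriv (deriv h) u) u := fun u hu =>
    ((hc1.differentiableOn (by simp) u hu).differentiableAt (hO.mem_nhds hu)).hasDerivAt
  have hd_h2 : ∀ u ∈ Ioo (-ε) ε, HasDerivAt (deriv (deriv h)) (deriv (deriv (deriv h)) u) u :=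
    fun u hu =>
    ((hc2.differentiableOn (by simp) u hu).differentiableAt (hO.mem_nhds hu)).hasDerivAt
  -- uniform bounds on compact subinterval
  have hsub2 : Icc (-(ε/2)) (ε/2) ⊆ Ioo (-ε) ε := fun t ht => by
    constructor
    · have := ht.1; simp only [mem_Icc] at *; linarith
    · have := ht.2; linarith
  obtain ⟨M1, hM1⟩ := (isCompact_Icc (a := -(ε/2)) (b := ε/2)).exists_bound_of_continuousOn
    ((hc1.continuousOn).mono hsub2)
  obtain ⟨M2, hM2⟩ := (isCompact_Icc (a := -(ε/2)) (b := ε/2)).exists_bound_of_continuousOn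
    ((hc2.continuousOn).mono hsub2)
  obtain ⟨M3, hM3⟩ := (isCompact_Icc (a := -(ε/2)) (b := ε/2)).exists_bound_of_continuousOn
    ((hc3.continuousOn).mono hsub2)
  set M := max 1 (max M1 (max M2 M3)) with hM
  have hMge1 : (1:ℝ) ≤ M := le_max_left _ _
  have hM0 : (0:ℝ) ≤ M := by linarith
  have b1 : ∀ u, |u| ≤ ε/2 → |deriv h u| ≤ M := by
    intro u hu
    have := hM1 u (mem_Icc.mpr (abs_le.mp hu))
    rw [Real.norm_eq_abs] at this
    refine this.trans ?_
    exact le_trans (le_max_left _ _) (le_max_right _ _)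
  have b2 : ∀ u, |u| ≤ ε/2 → |deriv (deriv h) u| ≤ M := by
    intro u hu
    have := hM2 u (mem_Icc.mpr (abs_le.mp hu))
    rw [Real.norm_eq_abs] at this
    refine this.trans ?_
    exact le_trans (le_trans (le_max_left _ _) (le_max_right _ _)) (le_max_right _ _)
  have b3 : ∀ u, |u| ≤ ε/2 → |deriv (deriv (deriv h)) u| ≤ M := by
    intro u hu
    have := hM3 u (mem_Icc.mpr (abs_le.mp hu))
    rw [Real.norm_eq_abs] at this
    refine this.trans ?_
    exact le_trans (le_trans (le_max_right _ _) (le_max_right _ _)) (le_max_right _ _)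
  have hsubI : Icc (0:ℝ) (ε/2) ⊆ Ioo (-ε) ε := fun t ht => ⟨by linarith [ht.1], by linarith [ht.2]⟩
  have bh : ∀ u, 0 ≤ u → u ≤ ε/2 → |h u| ≤ M * u := by
    intro u hu0 hu
    have key := (convex_Icc (0:ℝ) (ε/2)).norm_image_sub_le_of_norm_hasDerivWithin_le
      (f := h) (f' := deriv h)
      (fun t ht => (hd_h t (hsubI ht)).hasDerivWithinAt)
      (C := M)
      (fun t ht => by
        rw [Real.norm_eq_abs]
        exact b1 t (by rw [abs_of_nonneg ht.1]; exact ht.2))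
      (mem_Icc.mpr ⟨le_refl 0, by linarith⟩) (mem_Icc.mpr ⟨hu0, hu⟩)
    rw [h0, sub_zero, sub_zero, Real.norm_eq_abs, Real.norm_eq_abs, abs_of_nonneg hu0] at key
    exact key
  -- choice of δ
  set δ := min 1 ((ε/2)^γ) with hδdef
  have hδ0 : 0 < δ := lt_min one_pos (Real.rpow_pos_of_pos (by linarith) γ)
  have hδ1 : δ ≤ 1 := min_le_left _ _
  have hXle : ∀ x, 0 < x → x < δ → x^p ≤ ε/2 := by
    intro x hx hxδ
    have h1 : x ^ p ≤ ((ε/2)^γ) ^ p :=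
      Real.rpow_le_rpow hx.le (le_trans hxδ.le (min_le_right _ _)) hp0.le
    have h2 : ((ε/2)^γ) ^ p = ε/2 := by
      rw [← Real.rpow_mul (by linarith : (0:ℝ) ≤ ε/2)]
      rw [hp, mul_one_div, div_self hγ0.ne', Real.rpow_one]
    rw [h2] at h1
    exact h1
  have hXone : ∀ x, 0 < x → x < δ → x^p ≤ 1 := fun x hx hxδ =>
    Real.rpow_le_one hx.le (le_of_lt (lt_of_lt_of_le hxδ hδ1)) hp0.le
  have hXpos : ∀ x : ℝ, 0 < x → 0 < x^p := fun x hx => Real.rpow_pos_of_pos hx p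
  have hXO : ∀ x, 0 < x → x < δ → x^p ∈ Ioo (-ε) ε := by
    intro x hx hxδ
    constructor
    · have := hXpos x hx; linarith
    · exact lt_of_le_of_lt (hXle x hx hxδ) (by linarith)
  -- rpow conversion helpers
  have hpow2 : ∀ x : ℝ, 0 < x → (x^p)^2 = x^(2*p) := by
    intro x hx
    rw [← Real.rpow_natCast (x^p) 2, ← Real.rpow_mul hx.le]
    norm_num [mul_comm]
  have hpowdiv : ∀ x : ℝ, 0 < x → x^(2*p-1) = (x^p)^2/x := by
    intro x hx
    rw [Real.rpow_sub hx, Real.rpow_one, hpow2 x hx]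
  -- first derivative identity on (0, δ)
  have hHD1 : ∀ x ∈ Ioo (0:ℝ) δ, HasDerivAt η (S8F1 h (deriv h) p x) x := by
    intro x hx
    have hbase := S8HD1 hx.1 (hd_h _ (hXO x hx.1 hx.2))
    refine hbase.congr_of_eventuallyEq ?_
    filter_upwards [isOpen_Ioo.mem_nhds hx] with y hy
    rw [hη, abs_of_pos hy.1]
  have hd1 : ∀ x ∈ Ioo (0:ℝ) δ, deriv η x = S8F1 h (deriv h) p x :=
    fun x hx => (hHD1 x hx).deriv
  have hHD2 : ∀ x ∈ Ioo (0:ℝ) δ,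
      HasDerivAt (deriv η) (S8F2 h (deriv h) (deriv (deriv h)) p x) x := by
    intro x hx
    have hbase := S8HD2 hx.1 (hd_h _ (hXO x hx.1 hx.2)) (hd_h1 _ (hXO x hx.1 hx.2))
    refine hbase.congr_of_eventuallyEq ?_
    filter_upwards [isOpen_Ioo.mem_nhds hx] with y hy
    exact hd1 y hy
  have hd2 : ∀ x ∈ Ioo (0:ℝ) δ,
      deriv (deriv η) x = S8F2 h (deriv h) (deriv (deriv h)) p x :=
    fun x hx => (hHD2 x hx).deriv
  have hHD3 : ∀ x ∈ Ioo (0:ℝ) δ,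
      HasDerivAt (deriv (deriv η))
        (S8F3 h (deriv h) (deriv (deriv h)) (deriv (deriv (deriv h))) p x) x := by
    intro x hx
    have hbase := S8HD3 hx.1 (hd_h _ (hXO x hx.1 hx.2)) (hd_h1 _ (hXO x hx.1 hx.2))
      (hd_h2 _ (hXO x hx.1 hx.2))
    refine hbase.congr_of_eventuallyEq ?_
    filter_upwards [isOpen_Ioo.mem_nhds hx] with y hy
    exact hd2 y hy
  have hd3 : ∀ x ∈ Ioo (0:ℝ) δ,
      deriv (deriv (deriv η)) x = S8F3 h (deriv h) (deriv (deriv h)) (deriv (deriv (deriv h))) p x :=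
    fun x hx => (hHD3 x hx).deriv
  -- pointwise bounds
  have hdata : ∀ x ∈ Ioo (0:ℝ) δ, |h (x^p)| ≤ M * (x^p) ∧ |deriv h (x^p)| ≤ M ∧
      |deriv (deriv h) (x^p)| ≤ M ∧ |deriv (deriv (deriv h)) (x^p)| ≤ M := by
    intro x hx
    have hX0 := hXpos x hx.1
    have hXε := hXle x hx.1 hx.2
    have habs : |x^p| ≤ ε/2 := by rw [abs_of_pos hX0]; exact hXε
    exact ⟨bh _ hX0.le hXε, b1 _ habs, b2 _ habs, b3 _ habs⟩
  have bF1 : ∀ x ∈ Ioo (0:ℝ) δ, |S8F1 h (deriv h) p x| ≤ 100*M^2*(x * x^(2*p)) := by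
    intro x hx
    obtain ⟨hH, hA, hB, hD⟩ := hdata x hx
    have := S8bound1 hp0 hphalf hMge1 hx.1.le (hXpos x hx.1).le (hXone x hx.1 hx.2) hH hA
    simp only [S8F1]
    rw [← hpow2 x hx.1]
    exact this
  have bF2 : ∀ x ∈ Ioo (0:ℝ) δ,
      |S8F2 h (deriv h) (deriv (deriv h)) p x| ≤ 100*M^2*x^(2*p) := by
    intro x hx
    obtain ⟨hH, hA, hB, hD⟩ := hdata x hx
    have := S8bound2 hp0 hphalf hMge1 (hXpos x hx.1).le (hXone x hx.1 hx.2) hH hA hB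
    simp only [S8F2]
    rw [← hpow2 x hx.1]
    exact this
  have bF3 : ∀ x ∈ Ioo (0:ℝ) δ,
      |S8F3 h (deriv h) (deriv (deriv h)) (deriv (deriv (deriv h))) p x|
        ≤ 100*M^2*x^(2*p-1) := by
    intro x hx
    obtain ⟨hH, hA, hB, hD⟩ := hdata x hx
    have hx0 := hx.1
    have hxne : x ≠ 0 := hx0.ne'
    have key := S8bound3 hp0 hphalf hMge1 (hXpos x hx0).le (hXone x hx0 hx.2) hH hA hB hD
    have hmul : S8F3 h (deriv h) (deriv (deriv h)) (deriv (deriv (deriv h))) p x * x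
        = (4*p + 2*p^2*(p+3))*(x^p)*(h (x^p))*(deriv h (x^p))
          + (2*p^2*(p+3) + 4*p^3)*(x^p)^2*((deriv h (x^p))^2 + h (x^p) * deriv (deriv h) (x^p))
          + 2*p^3*(x^p)^3*(3*(deriv h (x^p))*(deriv (deriv h) (x^p))
              + h (x^p) * deriv (deriv (deriv h)) (x^p)) := by
      simp only [S8F3]
      field_simp
    have habs : |S8F3 h (deriv h) (deriv (deriv h)) (deriv (deriv (deriv h))) p x| * x
        ≤ 100*M^2*(x^p)^2 := by
      calc |S8F3 h (deriv h) (deriv (deriv h)) (deriv (deriv (deriv h))) p x| * x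
          = |S8F3 h (deriv h) (deriv (deriv h)) (deriv (deriv (deriv h))) p x * x| := by
            rw [abs_mul, abs_of_pos hx0]
        _ ≤ 100*M^2*(x^p)^2 := by rw [hmul]; exact key
    rw [hpowdiv x hx0, ← mul_div_assoc, le_div_iff₀ hx0]
    exact habs
  -- second derivative at 0
  have bdη1 : ∀ x ∈ Ioo (0:ℝ) δ, |deriv η x| ≤ 100*M^2*(x * x^(2*p)) := by
    intro x hx
    rw [hd1 x hx]
    exact bF1 x hx
  have hd2_0 : HasDerivAt (deriv η) 0 0 := by
    rw [hasDerivAt_iff_tendsto_slope]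
    have htend : Filter.Tendsto (fun t : ℝ => 100*M^2*|t|^(2*p)) (nhdsWithin 0 {(0:ℝ)}ᶜ)
        (nhds 0) := by
      have h1 : ContinuousAt (fun s : ℝ => s^(2*p)) 0 :=
        Real.continuousAt_rpow_const 0 (2*p) (Or.inr (by linarith))
      have h2 : Filter.Tendsto (fun t : ℝ => |t|^(2*p)) (nhds 0) (nhds 0) := by
        have h3 : Filter.Tendsto (fun t : ℝ => |t|) (nhds (0:ℝ)) (nhds (0:ℝ)) := by
          simpa using continuous_abs.tendsto (0:ℝ)
        have := h1.tendsto.comp h3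
        simpa [Function.comp_def, Real.zero_rpow h2p0.ne'] using this
      have := h2.const_mul (100*M^2)
      simpa using this.mono_left nhdsWithin_le_nhds
    refine squeeze_zero_norm' ?_ htend
    have hmem : Ioo (-δ) δ ∈ nhds (0:ℝ) := Ioo_mem_nhds (by linarith) hδ0
    filter_upwards [self_mem_nhdsWithin, mem_nhdsWithin_of_mem_nhds hmem] with t ht1 ht2
    have htne : t ≠ 0 := ht1
    have habs : |deriv η t| ≤ 100*M^2*(|t| * |t|^(2*p)) := by
      rcases lt_or_gt_of_ne htne with htneg | htpos
      · have hmem' : -t ∈ Ioo (0:ℝ) δ := ⟨by linarith, by linarith [ht2.1]⟩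
        have hbd := bdη1 (-t) hmem'
        rw [d1odd t, abs_neg, abs_of_neg htneg]
        exact hbd
      · have hmem' : t ∈ Ioo (0:ℝ) δ := ⟨htpos, ht2.2⟩
        have := bdη1 t hmem'
        rwa [abs_of_pos htpos]
    rw [Real.norm_eq_abs, slope_def_field, d1_0, sub_zero, sub_zero, abs_div]
    rw [div_le_iff₀ (abs_pos.mpr htne)]
    calc |deriv η t| ≤ 100*M^2*(|t| * |t|^(2*p)) := habs
      _ = 100*M^2*|t|^(2*p) * |t| := by ring
  have hd2at0 : deriv (deriv η) 0 = 0 := hd2_0.deriv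
  -- pointwise second-derivative bound, including 0
  have P : ∀ t, 0 ≤ t → t < δ → |deriv (deriv η) t| ≤ 100*M^2*t^(2*p) := by
    intro t ht0 htδ
    rcases eq_or_lt_of_le ht0 with heq | ht0'
    · rw [← heq, hd2at0, Real.zero_rpow h2p0.ne']
      simp
    · rw [hd2 t ⟨ht0', htδ⟩]
      exact bF2 t ⟨ht0', htδ⟩
  -- Hölder estimate on [0, δ)
  have Q : ∀ a b : ℝ, 0 ≤ a → a ≤ b → b < δ →
      |deriv (deriv η) b - deriv (deriv η) a| ≤ 400*M^2*(b-a)^(2*p) := by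
    intro a b ha0 hab hbδ
    rcases eq_or_lt_of_le hab with heq | hab'
    · rw [heq]
      simp [Real.zero_rpow h2p0.ne']
    · by_cases hcase : a ≤ b - a
      · -- use pointwise bounds
        have hb2 : b ≤ 2*(b-a) := by linarith
        have hR0 : (0:ℝ) ≤ (b-a)^(2*p) := Real.rpow_nonneg (by linarith) _
        have hbb : b^(2*p) ≤ 2*(b-a)^(2*p) := by
          calc b^(2*p) ≤ (2*(b-a))^(2*p) :=
                Real.rpow_le_rpow (by linarith) hb2 (by linarith)
            _ = 2^(2*p) * (b-a)^(2*p) := Real.mul_rpow (by norm_num) (by linarith)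
            _ ≤ 2^(1:ℝ) * (b-a)^(2*p) := by
                refine mul_le_mul_of_nonneg_right ?_ hR0
                exact Real.rpow_le_rpow_of_exponent_le (by norm_num) hp1
            _ = 2*(b-a)^(2*p) := by rw [Real.rpow_one]
        have haa : a^(2*p) ≤ b^(2*p) := Real.rpow_le_rpow ha0 hab (by linarith)
        have h1 := P a ha0 (lt_of_le_of_lt hab hbδ)
        have h2 := P b (le_trans ha0 hab) hbδ
        have hq0 : (0:ℝ) ≤ M^2 := sq_nonneg M
        calc |deriv (deriv η) b - deriv (deriv η) a|
            ≤ |deriv (deriv η) b| + |deriv (deriv η) a| := abs_sub _ _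
          _ ≤ 100*M^2*b^(2*p) + 100*M^2*a^(2*p) := add_le_add h2 h1
          _ ≤ 100*M^2*(2*(b-a)^(2*p)) + 100*M^2*(2*(b-a)^(2*p)) := by
              refine add_le_add ?_ ?_
              · refine mul_le_mul_of_nonneg_left hbb (by positivity)
              · refine mul_le_mul_of_nonneg_left (le_trans haa hbb) (by positivity)
          _ = 400*M^2*(b-a)^(2*p) := by ring
      · -- mean value theorem
        push_neg at hcase
        have ha0' : 0 < a := by linarith
        have hsub : Icc a b ⊆ Ioo (0:ℝ) δ := fun t ht =>
          ⟨lt_of_lt_of_le ha0' ht.1, lt_of_le_of_lt ht.2 hbδ⟩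
        obtain ⟨c, hc, hceq⟩ := exists_hasDerivAt_eq_slope (deriv (deriv η))
          (S8F3 h (deriv h) (deriv (deriv h)) (deriv (deriv (deriv h))) p) hab'
          (fun t ht => ((hHD3 t (hsub ht)).continuousAt).continuousWithinAt)
          (fun t ht => hHD3 t (hsub (Ioo_subset_Icc_self ht)))
        have hcmem : c ∈ Ioo (0:ℝ) δ := hsub (Ioo_subset_Icc_self hc)
        have heq2 : deriv (deriv η) b - deriv (deriv η) a
            = S8F3 h (deriv h) (deriv (deriv h)) (deriv (deriv (deriv h))) p c * (b-a) := by
          rw [hceq, div_mul_cancel₀ _ (sub_ne_zero.mpr hab'.ne')]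
        have hba0 : (0:ℝ) < b - a := by linarith
        have hc3 : |S8F3 h (deriv h) (deriv (deriv h)) (deriv (deriv (deriv h))) p c|
            ≤ 100*M^2*(b-a)^(2*p-1) := by
          refine (bF3 c hcmem).trans ?_
          refine mul_le_mul_of_nonneg_left ?_ (by positivity)
          exact Real.rpow_le_rpow_of_nonpos hba0 (by linarith [hc.1]) (by linarith)
        calc |deriv (deriv η) b - deriv (deriv η) a|
            = |S8F3 h (deriv h) (deriv (deriv h)) (deriv (deriv (deriv h))) p c| * (b-a) := by
              rw [heq2, abs_mul, abs_of_pos hba0]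
          _ ≤ 100*M^2*(b-a)^(2*p-1) * (b-a) := mul_le_mul_of_nonneg_right hc3 hba0.le
          _ = 100*M^2*((b-a)^(2*p-1) * (b-a)^(1:ℝ)) := by rw [Real.rpow_one]; ring
          _ = 100*M^2*(b-a)^(2*p) := by rw [← Real.rpow_add hba0]; norm_num
          _ ≤ 400*M^2*(b-a)^(2*p) := by
              refine mul_le_mul_of_nonneg_right ?_ (Real.rpow_nonneg hba0.le _)
              nlinarith [sq_nonneg M]
  -- symmetric reduction
  have η2abs : ∀ x : ℝ, deriv (deriv η) x = deriv (deriv η) |x| := by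
    intro x
    rcases le_or_gt 0 x with hx | hx
    · rw [abs_of_nonneg hx]
    · rw [abs_of_neg hx]
      exact (η2even x).symm
  have key : ∀ x ∈ Ioo (-δ) δ, ∀ y ∈ Ioo (-δ) δ, |x| ≤ |y| →
      |deriv (deriv η) x - deriv (deriv η) y| ≤ 400*M^2 * |x-y|^(2*p) := by
    intro x hx y hy hxy
    rw [η2abs x, η2abs y, abs_sub_comm]
    have hyδ : |y| < δ := abs_lt.mpr ⟨hy.1, hy.2⟩
    refine (Q |x| |y| (abs_nonneg x) hxy hyδ).trans ?_
    refine mul_le_mul_of_nonneg_left ?_ (by positivity)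
    refine Real.rpow_le_rpow (by linarith [hxy]) ?_ (by linarith)
    calc |y| - |x| ≤ |y - x| := abs_sub_abs_le_abs_sub y x
      _ = |x - y| := abs_sub_comm y x
  have hC0 : (0:ℝ) < 400*M^2 := by nlinarith [hMge1, sq_nonneg (M-1)]
  refine ⟨400*M^2, hC0, δ, hδ0, ?_, ?_⟩
  · intro x hx y hy
    rw [h2γ]
    rcases le_total |x| |y| with hxy | hxy
    · exact key x hx y hy hxy
    · rw [abs_sub_comm, abs_sub_comm x y]
      exact key y hy x hx hxy
  · intro s hs
    rw [hd3 s hs, show 2/γ - 1 = 2*p - 1 by rw [h2γ]]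
    refine (bF3 s hs).trans ?_
    refine mul_le_mul_of_nonneg_right ?_ (Real.rpow_nonneg hs.1.le _)
    nlinarith [sq_nonneg M]
end

section
/- For γ > 0, let Φ(t,a) = (-a + (1+a)t, (1+a) t aᵞ / 2) and let Δ be the interior of the triangle with vertices (-1,0), (1,0), (1,1); then for every (x₁,x₂) ∈ Δ with x₂ > 0 there exists a unique (t,a) ∈ (0,1)² with Φ(t,a) = (x₁,x₂). -/
open Real Set

theorem stmt_10 (γ : ℝ) (hγ : 0 < γ) (x₁ x₂ : ℝ)
    (hx₂ : 0 < x₂) (hx₁ : x₁ < 1) (htri : x₂ < (x₁ + 1) / 2) :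
    ∃! p : ℝ × ℝ, (p.1 ∈ Ioo (0:ℝ) 1 ∧ p.2 ∈ Ioo (0:ℝ) 1) ∧
      -p.2 + (1 + p.2) * p.1 = x₁ ∧ (1 + p.2) * p.1 * p.2 ^ γ / 2 = x₂ := by
  have hx₁' : -1 < x₁ := by linarith
  set f : ℝ → ℝ := fun b => (x₁ + b) * b ^ γ / 2 with hf
  set a₀ : ℝ := max 0 (-x₁) with ha₀def
  have ha₀0 : 0 ≤ a₀ := le_max_left _ _
  have ha₀x : -x₁ ≤ a₀ := le_max_right _ _
  have ha₀1 : a₀ < 1 := max_lt one_pos (by linarith)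
  have hfa₀ : f a₀ = 0 := by
    rcases max_choice 0 (-x₁) with h | h
    · simp [hf, ha₀def, h, Real.zero_rpow hγ.ne']
    · simp [hf, ha₀def, h]
  have hf1 : f 1 = (x₁ + 1) / 2 := by simp [hf, Real.one_rpow]
  have hcont : Continuous f := by
    apply Continuous.div_const
    apply Continuous.mul (by continuity)
    rw [continuous_iff_continuousAt]
    exact fun x => Real.continuousAt_rpow_const x γ (Or.inr hγ.le)
  have hx₂mem : x₂ ∈ Ioo (f a₀) (f 1) := by rw [hfa₀, hf1]; exact ⟨hx₂, htri⟩
  obtain ⟨a, ha, hfa⟩ := intermediate_value_Ioo ha₀1.le hcont.continuousOn hx₂mem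
  have ha0 : 0 < a := lt_of_le_of_lt ha₀0 ha.1
  have hax : 0 < x₁ + a := by have := lt_of_le_of_lt ha₀x ha.1; linarith
  have ha1 : 0 < 1 + a := by linarith
  refine ⟨((x₁ + a) / (1 + a), a), ⟨⟨⟨div_pos hax ha1, (div_lt_one ha1).2 (by linarith)⟩,
    ⟨ha0, ha.2⟩⟩, ?_, ?_⟩, ?_⟩
  · field_simp
    ring
  · have : (1 + a) * ((x₁ + a) / (1 + a)) = x₁ + a := mul_div_cancel₀ _ ha1.ne'
    simpa [this] using hfa
  · rintro ⟨t', a'⟩ ⟨⟨ht', ha'⟩, e1, e2⟩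
    simp only at e1 e2 ht' ha'
    have ha'1 : 0 < 1 + a' := by have := ha'.1; linarith
    have he1 : (1 + a') * t' = x₁ + a' := by linarith
    have he2 : (x₁ + a') * a' ^ γ / 2 = x₂ := by rw [← he1]; linarith [e2]
    have hpow' : 0 < a' ^ γ := Real.rpow_pos_of_pos ha'.1 γ
    have hpow : 0 < a ^ γ := Real.rpow_pos_of_pos ha0 γ
    have hfa' : (x₁ + a) * a ^ γ / 2 = x₂ := hfa
    have hax' : 0 < x₁ + a' := by
      by_contra h
      push_neg at h
      nlinarith [mul_nonpos_of_nonpos_of_nonneg h hpow'.le]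
    have haa : a' = a := by
      rcases lt_trichotomy a' a with h | h | h
      · have hlt : a' ^ γ < a ^ γ := Real.rpow_lt_rpow ha'.1.le h hγ
        nlinarith [mul_lt_mul_of_pos_left hlt hax', mul_lt_mul_of_pos_right h hpow]
      · exact h
      · have hlt : a ^ γ < a' ^ γ := Real.rpow_lt_rpow ha0.le h hγ
        nlinarith [mul_lt_mul_of_pos_left hlt hax, mul_lt_mul_of_pos_right h hpow']
    have ht'eq : t' = (x₁ + a) / (1 + a) := by
      rw [eq_div_iff ha1.ne']
      rw [haa] at he1; linarith
    exact Prod.ext ht'eq haa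
end

section
/- Fix γ > 0 and p ≥ 1. The integral ∫₀^δ ∫₀^δ (a^{(γ−1)(p−1)} (t+a)^{p−1})^{-1} dt da is finite if and only if p < min{γ/(γ−1), (γ+2)/γ} (with γ/(γ−1) interpreted as +∞ when γ ≤ 1). -/
/-!
Write the integrand as `a ^ (-α) * (t + a) ^ (-β)` with `α = (γ - 1)(p - 1)` and `β = p - 1 ≥ 0`.
By Tonelli, integrability on the square is integrability of `a ^ (-α) * G a` on `(0, δ)`, where
`G a = ∫₀^δ (t + a) ^ (-β) dt`. As `t ↦ (t + a) ^ (-β)` decreases, `G a ≥ c * (c + a) ^ (-β)` for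
`c ≤ δ`; taking `c = δ` and `c = a` bounds `G` below by a positive constant and by
`2 ^ (-β) * a ^ (1 - β)`, which forces `α < 1` and `α + β < 2`. Conversely, for any `b > 1` with
`β ≤ b`, `G a ≤ (2δ) ^ (b - β) ∫₀^∞ (t + a) ^ (-b) dt`, a multiple of `a ^ (1 - b)`, and choosing
`b < 2 - α` gives an integrable majorant.
-/

open Real Set MeasureTheory

lemma integrableOn_add_rpow_Ioo {a : ℝ} (ha : 0 < a) (δ β : ℝ) :
    IntegrableOn (fun t => (t + a) ^ (-β)) (Ioo 0 δ) := by
  refine (ContinuousOn.integrableOn_Icc ?_).mono_set Ioo_subset_Icc_self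
  refine ContinuousOn.rpow_const (by fun_prop) fun t ht => Or.inl ?_
  linarith [ht.1]

lemma mul_add_rpow_le_integral_add_rpow {a c δ β : ℝ} (ha : 0 < a) (hβ : 0 ≤ β) (hc : 0 ≤ c)
    (hcδ : c ≤ δ) : c * (c + a) ^ (-β) ≤ ∫ t in Ioo 0 δ, (t + a) ^ (-β) := by
  have hsub : Ioo 0 c ⊆ Ioo 0 δ := Ioo_subset_Ioo_right hcδ
  calc c * (c + a) ^ (-β) = ∫ _ in Ioo 0 c, (c + a) ^ (-β) := by
        simp [measureReal_def, hc]
    _ ≤ ∫ t in Ioo 0 c, (t + a) ^ (-β) :=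
        setIntegral_mono_on (integrableOn_const (by simp)) (integrableOn_add_rpow_Ioo ha c β)
          measurableSet_Ioo fun t ht =>
            rpow_le_rpow_of_nonpos (by linarith [ht.1]) (by linarith [ht.2]) (by linarith)
    _ ≤ ∫ t in Ioo 0 δ, (t + a) ^ (-β) := by
        refine setIntegral_mono_set (integrableOn_add_rpow_Ioo ha δ β) ?_ hsub.eventuallyLE
        filter_upwards [ae_restrict_mem measurableSet_Ioo] with t ht
        exact rpow_nonneg (by linarith [ht.1]) _

lemma integral_add_rpow_le {a δ b : ℝ} (ha : 0 < a) (hδ : 0 < δ) (hb : 1 < b) :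
    ∫ t in Ioo 0 δ, (t + a) ^ (-b) ≤ a ^ (1 - b) / (b - 1) := by
  have h0 : (0:ℝ) ∉ uIcc a (δ + a) := by
    rw [uIcc_of_le (by linarith)]
    exact fun h => absurd h.1 (by linarith)
  have hval : ∫ t in Ioo 0 δ, (t + a) ^ (-b) = (a ^ (1 - b) - (δ + a) ^ (1 - b)) / (b - 1) := by
    rw [← integral_Ioc_eq_integral_Ioo, ← intervalIntegral.integral_of_le hδ.le,
      intervalIntegral.integral_comp_add_right (fun x => x ^ (-b)) a, zero_add,
      integral_rpow (Or.inr ⟨by linarith, h0⟩), div_eq_div_iff (by linarith) (by linarith)]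
    ring_nf
  rw [hval]
  gcongr
  exact sub_le_self _ (rpow_nonneg (by linarith) _)

lemma integral_add_rpow_le_of_le {a δ β b : ℝ} (ha : a ∈ Ioo 0 δ) (hβb : β ≤ b) (hb : 1 < b) :
    ∫ t in Ioo 0 δ, (t + a) ^ (-β) ≤ (2 * δ) ^ (b - β) * (a ^ (1 - b) / (b - 1)) := by
  have hδ : 0 < δ := ha.1.trans ha.2
  calc ∫ t in Ioo 0 δ, (t + a) ^ (-β) ≤ ∫ t in Ioo 0 δ, (2 * δ) ^ (b - β) * (t + a) ^ (-b) := by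
        refine setIntegral_mono_on (integrableOn_add_rpow_Ioo ha.1 δ β)
          ((integrableOn_add_rpow_Ioo ha.1 δ b).const_mul _) measurableSet_Ioo fun t ht => ?_
        have hpos : 0 < t + a := by linarith [ht.1, ha.1]
        calc (t + a) ^ (-β) = (t + a) ^ (b - β) * (t + a) ^ (-b) := by
              rw [← rpow_add hpos]; ring_nf
          _ ≤ (2 * δ) ^ (b - β) * (t + a) ^ (-b) := by
              gcongr; linarith [ht.2, ha.2]
    _ ≤ (2 * δ) ^ (b - β) * (a ^ (1 - b) / (b - 1)) := by
        rw [integral_const_mul]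
        gcongr
        exact integral_add_rpow_le ha.1 hδ hb

lemma integrableOn_rpow_mul_add_rpow_iff_integrableOn_integral {α β δ : ℝ} :
    IntegrableOn (fun q : ℝ × ℝ => q.2 ^ (-α) * (q.1 + q.2) ^ (-β)) (Ioo 0 δ ×ˢ Ioo 0 δ) ↔
      IntegrableOn (fun a => a ^ (-α) * ∫ t in Ioo 0 δ, (t + a) ^ (-β)) (Ioo 0 δ) := by
  set μ := volume.restrict (Ioo (0:ℝ) δ)
  have hmeas : StronglyMeasurable (fun q : ℝ × ℝ => q.2 ^ (-α) * (q.1 + q.2) ^ (-β)) :=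
    Measurable.stronglyMeasurable (by fun_prop)
  have hsections : ∀ᵐ a ∂μ, Integrable (fun t => a ^ (-α) * (t + a) ^ (-β)) μ := by
    filter_upwards [ae_restrict_mem measurableSet_Ioo] with a ha
    exact (integrableOn_add_rpow_Ioo ha.1 δ β).const_mul _
  have hnorm : EqOn (fun a => ∫ t, ‖a ^ (-α) * (t + a) ^ (-β)‖ ∂μ)
      (fun a => a ^ (-α) * ∫ t in Ioo 0 δ, (t + a) ^ (-β)) (Ioo 0 δ) := fun a ha => by
    simp only [← integral_const_mul, μ]
    refine setIntegral_congr_fun measurableSet_Ioo fun t ht => ?_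
    have : 0 < t + a := by linarith [ht.1, ha.1]
    have : 0 < a := ha.1
    rw [Real.norm_eq_abs, abs_of_nonneg (by positivity)]
  rw [IntegrableOn, Measure.volume_eq_prod, ← Measure.prod_restrict,
    integrable_prod_iff' hmeas.aestronglyMeasurable,
    ← integrableOn_congr_fun hnorm measurableSet_Ioo]
  exact and_iff_right hsections

lemma neg_one_lt_of_integrableOn_of_mul_rpow_le {g : ℝ → ℝ} {c s δ : ℝ} (hδ : 0 < δ) (hc : 0 < c)
    (hg : IntegrableOn g (Ioo 0 δ)) (hle : ∀ a ∈ Ioo 0 δ, c * a ^ s ≤ g a) : -1 < s := by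
  rw [← intervalIntegral.integrableOn_Ioo_rpow_iff hδ]
  have hbound : IntegrableOn (fun a => c * a ^ s) (Ioo 0 δ) := by
    refine hg.mono' (by fun_prop) ?_
    filter_upwards [ae_restrict_mem measurableSet_Ioo] with a ha
    rw [Real.norm_eq_abs, abs_of_nonneg (by have := ha.1; positivity)]
    exact hle a ha
  simpa [hc.ne', IntegrableOn] using hbound.const_mul c⁻¹

lemma integrableOn_rpow_mul_integral_add_rpow_iff {α β δ : ℝ} (hβ : 0 ≤ β) (hδ : 0 < δ) :
    IntegrableOn (fun a => a ^ (-α) * ∫ t in Ioo 0 δ, (t + a) ^ (-β)) (Ioo 0 δ) ↔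
      α < 1 ∧ α + β < 2 := by
  constructor
  · intro h
    have hα : -1 < -α := by
      refine neg_one_lt_of_integrableOn_of_mul_rpow_le hδ (by positivity : 0 < δ * (2 * δ) ^ (-β))
        h fun a ha => ?_
      have : 0 < a := ha.1
      calc δ * (2 * δ) ^ (-β) * a ^ (-α) ≤ δ * (δ + a) ^ (-β) * a ^ (-α) := by
            have : (2 * δ) ^ (-β) ≤ (δ + a) ^ (-β) :=
              rpow_le_rpow_of_nonpos (by linarith) (by linarith [ha.2]) (by linarith)
            gcongr
        _ ≤ a ^ (-α) * ∫ t in Ioo 0 δ, (t + a) ^ (-β) := by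
            rw [mul_comm _ (a ^ _)]
            gcongr
            exact mul_add_rpow_le_integral_add_rpow ha.1 hβ hδ.le le_rfl
    have hαβ : -1 < -α + (1 - β) := by
      refine neg_one_lt_of_integrableOn_of_mul_rpow_le hδ (by positivity : (0 : ℝ) < 2 ^ (-β))
        h fun a ha => ?_
      calc 2 ^ (-β) * a ^ (-α + (1 - β)) = a ^ (-α) * (a * (a + a) ^ (-β)) := by
            rw [← two_mul, mul_rpow zero_le_two ha.1.le, rpow_add ha.1, sub_eq_add_neg,
              rpow_add ha.1, rpow_one]
            ring
        _ ≤ a ^ (-α) * ∫ t in Ioo 0 δ, (t + a) ^ (-β) :=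
            mul_le_mul_of_nonneg_left (mul_add_rpow_le_integral_add_rpow ha.1 hβ ha.1.le ha.2.le)
              (rpow_nonneg ha.1.le _)
    constructor <;> linarith
  · rintro ⟨hα, hαβ⟩
    obtain ⟨b, hmaxb, hb2⟩ := exists_between (max_lt (by linarith) (by linarith) : max β 1 < 2 - α)
    have hb : 1 < b := (le_max_right β 1).trans_lt hmaxb
    have hβb : β ≤ b := ((le_max_left β 1).trans_lt hmaxb).le
    have hGmeas : Measurable fun a => ∫ t in Ioo 0 δ, (t + a) ^ (-β) :=
      (Measurable.stronglyMeasurable (f := fun q : ℝ × ℝ => (q.1 + q.2) ^ (-β))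
        (by fun_prop)).integral_prod_left'.measurable
    have hmajorant : IntegrableOn (fun a => (2 * δ) ^ (b - β) / (b - 1) * a ^ (-α + (1 - b)))
        (Ioo 0 δ) :=
      ((intervalIntegral.integrableOn_Ioo_rpow_iff hδ).2 (by linarith)).const_mul _
    refine hmajorant.mono' (by fun_prop : Measurable _).aestronglyMeasurable ?_
    filter_upwards [ae_restrict_mem measurableSet_Ioo] with a ha
    have hG : 0 ≤ ∫ t in Ioo 0 δ, (t + a) ^ (-β) :=
      setIntegral_nonneg measurableSet_Ioo fun t ht => rpow_nonneg (by linarith [ht.1, ha.1]) _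
    rw [Real.norm_eq_abs, abs_of_nonneg (mul_nonneg (rpow_nonneg ha.1.le _) hG)]
    calc a ^ (-α) * ∫ t in Ioo 0 δ, (t + a) ^ (-β)
        ≤ a ^ (-α) * ((2 * δ) ^ (b - β) * (a ^ (1 - b) / (b - 1))) :=
          mul_le_mul_of_nonneg_left (integral_add_rpow_le_of_le ha hβb hb) (rpow_nonneg ha.1.le _)
      _ = (2 * δ) ^ (b - β) / (b - 1) * a ^ (-α + (1 - b)) := by
          rw [rpow_add ha.1]; ring

theorem integrableOn_rpow_mul_add_rpow_iff {α β δ : ℝ} (hβ : 0 ≤ β) (hδ : 0 < δ) :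
    IntegrableOn (fun q : ℝ × ℝ => q.2 ^ (-α) * (q.1 + q.2) ^ (-β)) (Ioo 0 δ ×ˢ Ioo 0 δ) ↔
      α < 1 ∧ α + β < 2 := by
  rw [integrableOn_rpow_mul_add_rpow_iff_integrableOn_integral,
    integrableOn_rpow_mul_integral_add_rpow_iff hβ hδ]

theorem stmt_15 (γ p δ : ℝ) (hγ : 0 < γ) (hp : 1 ≤ p) (hδ : δ ∈ Ioo (0:ℝ) 1) :
    IntegrableOn
        (fun q : ℝ × ℝ => 1 / (q.2 ^ ((γ - 1) * (p - 1)) * (q.1 + q.2) ^ (p - 1)))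
        (Ioo 0 δ ×ˢ Ioo 0 δ)
      ↔ (p < (γ + 2) / γ ∧ (1 < γ → p < γ / (γ - 1))) := by
  have hpow : EqOn (fun q : ℝ × ℝ => 1 / (q.2 ^ ((γ - 1) * (p - 1)) * (q.1 + q.2) ^ (p - 1)))
      (fun q => q.2 ^ (-((γ - 1) * (p - 1))) * (q.1 + q.2) ^ (-(p - 1))) (Ioo 0 δ ×ˢ Ioo 0 δ) :=
    fun q ⟨hq1, hq2⟩ => by
      have hsum : 0 ≤ q.1 + q.2 := by linarith [hq1.1, hq2.1]
      simp only [one_div, mul_inv, rpow_neg hq2.1.le, rpow_neg hsum]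
  rw [integrableOn_congr_fun hpow (measurableSet_Ioo.prod measurableSet_Ioo),
    integrableOn_rpow_mul_add_rpow_iff (by linarith) hδ.1, lt_div_iff₀ hγ]
  have hp1 : 0 ≤ p - 1 := by linarith
  refine ⟨fun ⟨hα, hαβ⟩ => ⟨by linarith, fun hγ1 => ?_⟩, fun ⟨hαβ, hα⟩ => ⟨?_, by linarith⟩⟩
  · rw [lt_div_iff₀ (by linarith)]; linarith
  · rcases le_or_gt γ 1 with hγ1 | hγ1
    · nlinarith
    · have := hα hγ1
      rw [lt_div_iff₀ (by linarith)] at this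
      linarith
end
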